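/- arXiv:1711.08431 — 10 statements merged into one kernel-verified Lean document; each statement's English description precedes it below -/
import Mathlib

section
/- Let Ω ⊂ ℂ be a domain and J ⊂ ∂Ω a relatively open subset of the boundary. Suppose that the complement of the closure of Ω in the Riemann sphere ℂ ∪ {∞} is connected, and that ∂Ω ∖ J is contained in the closure of the complement of the closure of Ω. Then for every m ∈ ℕ, the set Δ_m = {z ∈ Ω ∪ J : dist(z, ∂Ω ∖ J) ≥ 1/m} has connected complement in the Riemann sphere. -/
/-!
Every point of `closure Ω` outside `Δ_m` lies within `1/m` of some `w ∈ ∂Ω \ J`. The ball of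
radius `1/m` about `w` misses `Δ_m`, and since `w` is a limit of points outside `closure Ω`, it
also meets the complement of `closure Ω`, which is connected in the sphere. Hence every point of
the complement of `Δ_m` is joined to that connected set by a connected set avoiding `Δ_m`.
-/

open Metric Set

theorem IsConnected.compl_image_of_forall_exists_isPreconnected {X Y : Type*}
    [TopologicalSpace X] [TopologicalSpace Y] {f : X → Y} (hf : Continuous f)
    (hinj : Function.Injective f) {C K : Set X} (hKC : K ⊆ C) (hC : IsConnected (f '' C)ᶜ)
    (hreach : ∀ z ∈ C \ K, ∃ T : Set X, IsPreconnected T ∧ z ∈ T ∧ Disjoint T K ∧ ¬T ⊆ C) :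
    IsConnected (f '' K)ᶜ := by
  obtain ⟨a, ha⟩ := hC.nonempty
  have hCK : (f '' C)ᶜ ⊆ (f '' K)ᶜ := compl_subset_compl.mpr (image_mono hKC)
  refine ⟨⟨a, hCK ha⟩, isPreconnected_of_forall a fun y hy => ?_⟩
  by_cases hyC : y ∈ f '' C
  · obtain ⟨z, hzC, rfl⟩ := hyC
    have hzK : z ∉ K := fun h => hy (mem_image_of_mem f h)
    obtain ⟨T, hT, hzT, hTK, hTC⟩ := hreach z ⟨hzC, hzK⟩
    obtain ⟨p, hpT, hpC⟩ := not_subset.mp hTC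
    have hpA : f p ∈ (f '' C)ᶜ := fun h => hpC (hinj.mem_set_image.mp h)
    have hTK' : f '' T ⊆ (f '' K)ᶜ :=
      subset_compl_iff_disjoint_right.mpr ((disjoint_image_iff hinj).mpr hTK)
    exact ⟨(f '' C)ᶜ ∪ f '' T, union_subset hCK hTK', Or.inl ha,
      Or.inr (mem_image_of_mem f hzT),
      hC.isPreconnected.union (f p) hpA (mem_image_of_mem f hpT) (hT.image f hf.continuousOn)⟩
  · exact ⟨(f '' C)ᶜ, hCK, ha, hyC, hC.isPreconnected⟩

theorem disjoint_ball_setOf_le_infDist {α : Type*} [PseudoMetricSpace α] {S : Set α} {w : α}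
    (hw : w ∈ S) (r : ℝ) : Disjoint (ball w r) {u | r ≤ infDist u S} :=
  disjoint_left.mpr fun _ hu hle => ((infDist_le_dist_of_mem hw).trans_lt hu).not_ge hle

theorem exists_ball_not_subset_of_infDist_lt {E : Type*} [NormedAddCommGroup E]
    [NormedSpace ℝ E] {C S : Set E} (hS : S ⊆ closure Cᶜ) (hne : S.Nonempty) {z : E} {r : ℝ}
    (hz : infDist z S < r) :
    ∃ T : Set E, IsPreconnected T ∧ z ∈ T ∧ Disjoint T {u | r ≤ infDist u S} ∧ ¬T ⊆ C := by
  obtain ⟨w, hwS, hzw⟩ := (infDist_lt_iff hne).mp hz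
  obtain ⟨p, hpC, hwp⟩ := mem_closure_iff.mp (hS hwS) r ((infDist_nonneg).trans_lt hz)
  refine ⟨ball w r, (convex_ball w r).isPreconnected, mem_ball.mpr hzw,
    disjoint_ball_setOf_le_infDist hwS r, fun hsub => hpC (hsub ?_)⟩
  rwa [mem_ball, dist_comm]

theorem infDist_frontier_diff_lt_of_mem_closure {α : Type*} [PseudoMetricSpace α]
    {Ω J : Set α} {r : ℝ} (hr : 0 < r) {z : α} (hz : z ∈ closure Ω)
    (hzK : z ∉ {u ∈ Ω ∪ J | infDist u (frontier Ω \ J) ≥ r}) :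
    infDist z (frontier Ω \ J) < r := by
  by_cases hzΩJ : z ∈ Ω ∪ J
  · exact not_le.mp fun h => hzK ⟨hzΩJ, h⟩
  · have hzS : z ∈ frontier Ω \ J :=
      ⟨⟨hz, fun h => hzΩJ (Or.inl (interior_subset h))⟩, fun h => hzΩJ (Or.inr h)⟩
    rwa [infDist_zero_of_mem hzS]

theorem stmt_0_general (Ω J : Set ℂ)
    (hJsub : J ⊆ frontier Ω)
    (hcompl : IsConnected ((((↑·) : ℂ → OnePoint ℂ) '' closure Ω)ᶜ))
    (hJc : frontier Ω \ J ⊆ closure (closure Ω)ᶜ)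
    (m : ℕ) (hm : 1 ≤ m) :
    IsConnected ((((↑·) : ℂ → OnePoint ℂ) ''
      {z ∈ Ω ∪ J | Metric.infDist z (frontier Ω \ J) ≥ 1 / (m : ℝ)})ᶜ) := by
  have hr : (0 : ℝ) < 1 / m := one_div_pos.mpr (by exact_mod_cast hm)
  rcases (frontier Ω \ J).eq_empty_or_nonempty with hS | hS
  · have hK : {z ∈ Ω ∪ J | infDist z (frontier Ω \ J) ≥ 1 / (m : ℝ)} = ∅ := by
      simp only [hS, infDist_empty, ge_iff_le, not_le.mpr hr, and_false, ofPred_false]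
    rw [hK, image_empty, compl_empty]
    exact isConnected_univ
  · have hKC : {z ∈ Ω ∪ J | infDist z (frontier Ω \ J) ≥ 1 / (m : ℝ)} ⊆ closure Ω :=
      fun z hz => hz.1.elim (fun h => subset_closure h) (fun h => frontier_subset_closure (hJsub h))
    refine hcompl.compl_image_of_forall_exists_isPreconnected OnePoint.continuous_coe
      OnePoint.coe_injective hKC fun z hz => ?_
    obtain ⟨T, hT, hzT, hTK, hTC⟩ := exists_ball_not_subset_of_infDist_lt hJc hS
      (infDist_frontier_diff_lt_of_mem_closure hr hz.1 hz.2)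
    exact ⟨T, hT, hzT, hTK.mono_right fun u hu => hu.2, hTC⟩

theorem stmt_0 (Ω J : Set ℂ) (hΩopen : IsOpen Ω) (hΩconn : IsConnected Ω)
    (hJsub : J ⊆ frontier Ω)
    (hJrelopen : ∃ U : Set ℂ, IsOpen U ∧ J = frontier Ω ∩ U)
    (hcompl : IsConnected ((((↑·) : ℂ → OnePoint ℂ) '' closure Ω)ᶜ))
    (hJc : frontier Ω \ J ⊆ closure (closure Ω)ᶜ)
    (m : ℕ) (hm : 1 ≤ m) :
    IsConnected ((((↑·) : ℂ → OnePoint ℂ) ''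
      {z ∈ Ω ∪ J | Metric.infDist z (frontier Ω \ J) ≥ 1 / (m : ℝ)})ᶜ) :=
  stmt_0_general Ω J hJsub hcompl hJc m hm
end

section
/- Let Ω ⊂ ℂ be a domain and J ⊂ ∂Ω a relatively open subset of its boundary. If K ⊂ Ω ∪ J is compact, then there exists a compact set E with K ⊂ E ⊂ Ω ∪ J such that E equals the closure of E ∩ Ω. -/
open Set

theorem stmt_1 (Ω J : Set ℂ) (hΩopen : IsOpen Ω) (hΩconn : IsConnected Ω)
    (hJsub : J ⊆ frontier Ω)
    (hJrelopen : ∃ U : Set ℂ, IsOpen U ∧ J = frontier Ω ∩ U)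
    (K : Set ℂ) (hK : IsCompact K) (hKsub : K ⊆ Ω ∪ J) :
    ∃ E : Set ℂ, IsCompact E ∧ K ⊆ E ∧ E ⊆ Ω ∪ J ∧ E = closure (E ∩ Ω) := by
  obtain ⟨U, hUopen, hJU⟩ := hJrelopen
  have hKU : K ⊆ Ω ∪ U := by
    intro x hx
    rcases hKsub hx with h | h
    · exact Or.inl h
    · exact Or.inr (hJU ▸ h).2
  obtain ⟨δ, hδpos, hδ⟩ :=
    hK.exists_thickening_subset_open (hΩopen.union hUopen) hKU
  set S : Set ℂ := Metric.thickening (δ/2) K ∩ Ω with hS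
  refine ⟨closure S, ?_, ?_, ?_, ?_⟩
  · -- compact
    apply IsCompact.of_isClosed_subset (hK.cthickening : IsCompact (Metric.cthickening (δ/2) K)) isClosed_closure
    calc closure S ⊆ closure (Metric.thickening (δ/2) K) :=
          closure_mono inter_subset_left
      _ ⊆ Metric.cthickening (δ/2) K := Metric.closure_thickening_subset_cthickening _ _
  · -- K ⊆ closure S
    intro x hx
    have hxthick : x ∈ Metric.thickening (δ/2) K :=
      Metric.self_subset_thickening (by linarith) K hx
    rcases hKsub hx with h | h
    · exact subset_closure ⟨hxthick, h⟩
    · have hxcl : x ∈ closure Ω := by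
        have := hJsub h
        exact this.1
      exact Metric.isOpen_thickening.inter_closure ⟨hxthick, hxcl⟩
  · -- closure S ⊆ Ω ∪ J
    intro x hx
    have hxcl : x ∈ closure Ω := closure_mono inter_subset_right hx
    have hxth : x ∈ Metric.thickening δ K := by
      have h1 : x ∈ Metric.cthickening (δ/2) K :=
        Metric.closure_thickening_subset_cthickening _ _
          (closure_mono inter_subset_left hx)
      exact Metric.cthickening_subset_thickening' hδpos (by linarith) K h1
    rcases hδ hxth with h | h
    · exact Or.inl h
    · by_cases hxΩ : x ∈ Ω
      · exact Or.inl hxΩ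
      · have : x ∈ frontier Ω := ⟨hxcl, by rwa [hΩopen.interior_eq]⟩
        exact Or.inr (hJU ▸ ⟨this, h⟩)
  · -- closure S = closure (closure S ∩ Ω)
    apply subset_antisymm
    · exact closure_mono fun y hy => ⟨subset_closure hy, hy.2⟩
    · calc closure (closure S ∩ Ω) ⊆ closure (closure S) := closure_mono inter_subset_left
        _ = closure S := closure_closure
end

section
/- Let Ω ⊂ ℂ be a domain and V ⊂ Ω an open set with closure(V) ∩ ∂Ω nonempty. Assume every point ζ ∈ closure(V) ∩ ∂Ω is a limit of points lying outside the closure of Ω. Then for every pair of open discs b₁, b₂ with closure(b₁) ⊂ b₂ ∩ Ω and b₂ ∩ Ωᶜ ≠ ∅, there exists a function f holomorphic on Ω and bounded on V such that the restriction f|_{b₁} admits no bounded holomorphic extension to b₂. -/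
open Set Metric

theorem stmt_3 (Ω V : Set ℂ) (hΩopen : IsOpen Ω) (hΩconn : IsConnected Ω)
    (hVopen : IsOpen V) (hVsub : V ⊆ Ω)
    (hVbd : (closure V ∩ frontier Ω).Nonempty)
    (happrox : ∀ ζ ∈ closure V ∩ frontier Ω, ζ ∈ closure (closure Ω)ᶜ)
    (c₁ c₂ : ℂ) (r₁ r₂ : ℝ) (hr₁ : 0 < r₁) (hr₂ : 0 < r₂)
    (hb₁ : closure (ball c₁ r₁) ⊆ ball c₂ r₂ ∩ Ω)
    (hb₂ : (ball c₂ r₂ ∩ Ωᶜ).Nonempty) :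
    ∃ f : ℂ → ℂ, DifferentiableOn ℂ f Ω ∧ (∃ M : ℝ, ∀ z ∈ V, ‖f z‖ ≤ M) ∧
      ¬ ∃ F : ℂ → ℂ, DifferentiableOn ℂ F (ball c₂ r₂) ∧
          (∃ M : ℝ, ∀ z ∈ ball c₂ r₂, ‖F z‖ ≤ M) ∧
          EqOn F f (ball c₁ r₁) := by
  -- First, find `w ∈ ball c₂ r₂` with `w ∉ Ω` and `w ∉ closure V`.
  obtain ⟨w₀, hw₀b, hw₀Ω⟩ := hb₂
  obtain ⟨w, hwb, hwΩ, hwV⟩ :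
      ∃ w, w ∈ ball c₂ r₂ ∧ w ∉ Ω ∧ w ∉ closure V := by
    by_cases hV : w₀ ∈ closure V
    · have hfr : w₀ ∈ frontier Ω := by
        constructor
        · exact closure_mono hVsub hV
        · rwa [hΩopen.interior_eq]
      have := happrox w₀ ⟨hV, hfr⟩
      have hnb : ball c₂ r₂ ∈ nhds w₀ := isOpen_ball.mem_nhds hw₀b
      rcases mem_closure_iff_nhds.mp this _ hnb with ⟨w, hwb, hwc⟩
      refine ⟨w, hwb, fun h => hwc (subset_closure h), fun h => hwc ?_⟩
      exact closure_mono hVsub h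
    · exact ⟨w₀, hw₀b, hw₀Ω, hV⟩
  -- `w` has positive distance to `V`.
  obtain ⟨δ, hδ, hδball⟩ := Metric.isOpen_iff.mp isClosed_closure.isOpen_compl w hwV
  refine ⟨fun z => (z - w)⁻¹, ?_, ⟨δ⁻¹, ?_⟩, ?_⟩
  · apply DifferentiableOn.inv
    · exact (differentiable_id.sub_const w).differentiableOn
    · intro z hz
      intro h
      apply hwΩ
      have : z = w := by linear_combination h
      rwa [← this]
  · intro z hz
    have hzw : δ ≤ dist z w := by
      by_contra h
      push_neg at h
      exact hδball (mem_ball.mpr h) (subset_closure hz)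
    have hzw' : (0:ℝ) < ‖z - w‖ := lt_of_lt_of_le hδ (by rwa [dist_eq_norm] at hzw)
    rw [norm_inv]
    rw [inv_le_inv₀ hzw' hδ]
    rwa [dist_eq_norm] at hzw
  · rintro ⟨F, hF, _, hEq⟩
    -- Consider `G z = (z - w) * F z - 1`, analytic on the ball, vanishing near `c₁`.
    set G : ℂ → ℂ := fun z => (z - w) * F z - 1 with hG
    have hGanal : AnalyticOnNhd ℂ G (ball c₂ r₂) := by
      apply DifferentiableOn.analyticOnNhd _ isOpen_ball
      exact (((differentiable_id.sub_const w).differentiableOn).mul hF).sub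
        (differentiableOn_const 1)
    have hzero : AnalyticOnNhd ℂ (fun _ => (0:ℂ)) (ball c₂ r₂) := analyticOnNhd_const
    have hc₁ : c₁ ∈ ball c₂ r₂ := (hb₁ (subset_closure (mem_ball_self hr₁))).1
    have hev : G =ᶠ[nhds c₁] (fun _ => (0:ℂ)) := by
      filter_upwards [isOpen_ball.mem_nhds (mem_ball_self hr₁)] with z hz
      have hzΩ : z ∈ Ω := (hb₁ (subset_closure hz)).2
      have hzw : z - w ≠ 0 := by
        intro h
        apply hwΩ
        have : z = w := by linear_combination h
        rwa [← this]
      simp only [hG, hEq hz, mul_inv_cancel₀ hzw, sub_self]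
    have heq : EqOn G (fun _ => (0:ℂ)) (ball c₂ r₂) :=
      hGanal.eqOn_of_preconnected_of_eventuallyEq hzero
        (convex_ball c₂ r₂).isPreconnected hc₁ hev
    have := heq hwb
    simp [hG] at this
end

section
/- Let b ⊂ ℂ be an open disc with β ∈ b and 0 ∉ b. Then there does not exist a holomorphic function F on b with F(z) ≠ 0 for all z ∈ b and F(z) = exp(−i·log((z − β)/z)) for all z ∈ b ∖ [0, β], where log is the principal branch. Equivalently, there is no continuous nonvanishing holomorphic extension of z ↦ exp(−i·log((z−β)/z)) across the segment [0, β] ∩ b. -/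
/-!
Off the segment `[0, β]` the function `f z = exp (-I * log ((z - β) / z))` satisfies
`z (z - β) f' + I β f = 0`, because the derivative of `log ((z - β) / z)` is `β / (z (z - β))`.
Since the segment has dense complement and a holomorphic `F` has continuous derivative, this
identity passes to every point of the disc. At `z = β` the first term vanishes, leaving
`I β F β = 0`, which is impossible for a nonvanishing `F`.
-/

open Set Metric Complex

section Segment

variable {E : Type*} [NormedAddCommGroup E] [NormedSpace ℝ E]

theorem isClosed_segment (x y : E) : IsClosed (segment ℝ x y) := by
  rw [← convexHull_pair]
  exact ((toFinite {x, y}).isCompact_convexHull ℝ).isClosed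

theorem dense_compl_segment [FiniteDimensional ℝ E] (hE : 1 < Module.finrank ℝ E) (x y : E) :
    Dense (segment ℝ x y)ᶜ := by
  have hline : Dense (range fun t : ℝ => x + t • (y - x))ᶜ :=
    ContDiff.dense_compl_range_of_finrank_lt_finrank (by fun_prop) (by simpa using hE)
  exact hline.mono (compl_subset_compl.2 (segment_eq_image' ℝ x y ▸ image_subset_range _ _))

end Segment

namespace Complex

theorem sub_div_self_mem_slitPlane {w z : ℂ} (hz : z ≠ 0) (hzw : z ∉ segment ℝ 0 w) :
    (z - w) / z ∈ slitPlane := by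
  rw [mem_slitPlane_iff_not_le_zero]
  intro hle
  obtain ⟨hre, him⟩ := nonpos_iff.1 hle
  set t := ((z - w) / z).re
  have ht : (z - w) / z = t := Complex.ext rfl (by simpa using him)
  have h1t : (0 : ℝ) < 1 - t := by linarith
  -- `(z - w) / z = t ≤ 0` forces `z = (1 - t)⁻¹ • w` with `(1 - t)⁻¹ ∈ (0, 1]`
  rw [segment_eq_image'] at hzw
  refine hzw ⟨(1 - t)⁻¹, ⟨by positivity, inv_le_one_of_one_le₀ (by linarith)⟩, ?_⟩
  rw [div_eq_iff hz] at ht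
  have h1t' : (1 - t : ℂ) ≠ 0 := by exact_mod_cast h1t.ne'
  simp only [zero_add, sub_zero, real_smul]
  push_cast
  field_simp
  linear_combination -ht

theorem hasDerivAt_cexp_neg_I_mul_log_sub_div {w z : ℂ} (hz : z ≠ 0)
    (hslit : (z - w) / z ∈ slitPlane) :
    HasDerivAt (fun z => exp (-I * log ((z - w) / z)))
      (-I * w / (z * (z - w)) * exp (-I * log ((z - w) / z))) z := by
  have hzw : z - w ≠ 0 := fun h => slitPlane_ne_zero hslit (by simp [h])
  have hquot : HasDerivAt (fun z => (z - w) / z) (w / z ^ 2) z :=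
    (((hasDerivAt_id' z).sub_const w).div (hasDerivAt_id' z) hz).congr_deriv (by ring)
  exact ((hquot.clog hslit).const_mul (-I)).cexp.congr_deriv (by field_simp)

end Complex

theorem stmt_8_general (β : ℝ)
    (c : ℂ) (r : ℝ)
    (hβb : (β : ℂ) ∈ ball c r) (h0 : (0:ℂ) ∉ ball c r) :
    ¬ ∃ F : ℂ → ℂ, DifferentiableOn ℂ F (ball c r) ∧
        (∀ z ∈ ball c r, F z ≠ 0) ∧
        (∀ z ∈ ball c r \ segment ℝ (0:ℂ) (β:ℂ),
          F z = Complex.exp (-Complex.I * Complex.log ((z - β) / z))) := by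
  rintro ⟨F, hF, hFne, hFeq⟩
  set S := segment ℝ (0 : ℂ) (β : ℂ)
  have hz0 : ∀ z ∈ ball c r, z ≠ 0 := fun z hz h => h0 (h ▸ hz)
  have hU : IsOpen (ball c r \ S) := isOpen_ball.sdiff (isClosed_segment _ _)
  have hode : EqOn (fun z => deriv F z * (z * (z - β)) + I * β * F z) 0 (ball c r \ S) := by
    intro z hz
    have hz₀ := hz0 z hz.1
    have hzβ : z - β ≠ 0 := fun h => hz.2 (sub_eq_zero.1 h ▸ right_mem_segment ℝ _ _)
    have hF' := (hasDerivAt_cexp_neg_I_mul_log_sub_div hz₀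
      (sub_div_self_mem_slitPlane hz₀ hz.2)).congr_of_eventuallyEq
      (Filter.eventually_of_mem (hU.mem_nhds hz) hFeq)
    simp only [Pi.zero_apply, hF'.deriv, ← hFeq z hz]
    field_simp
    ring
  have hode_ball : EqOn (fun z => deriv F z * (z * (z - β)) + I * β * F z) 0 (ball c r) :=
    hode.of_subset_closure
      (((hF.deriv isOpen_ball).continuousOn.mul (by fun_prop)).add
        (continuousOn_const.mul hF.continuousOn))
      continuousOn_const sdiff_subset
      ((dense_compl_segment (by simp) _ _).open_subset_closure_inter isOpen_ball)
  have hβF : I * β * F β = 0 := by simpa using hode_ball hβb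
  exact hFne _ hβb (by simpa [hz0 _ hβb] using hβF)

theorem stmt_8 (β : ℝ) (hβ : β ∈ Set.Ioo (0:ℝ) 1)
    (c : ℂ) (r : ℝ) (hr : 0 < r)
    (hβb : (β : ℂ) ∈ ball c r) (h0 : (0:ℂ) ∉ ball c r) :
    ¬ ∃ F : ℂ → ℂ, DifferentiableOn ℂ F (ball c r) ∧
        (∀ z ∈ ball c r, F z ≠ 0) ∧
        (∀ z ∈ ball c r \ segment ℝ (0:ℂ) (β:ℂ),
          F z = Complex.exp (-Complex.I * Complex.log ((z - β) / z))) :=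
  stmt_8_general β c r hβb h0
end

section
/- Let Ω ⊂ ℂ^d be a domain satisfying the star condition, and let V ⊂ Ω be a bounded open set. Then for every pair of open Euclidean balls b₁, b₂ in ℂ^d with closure(b₁) ⊂ b₂ ∩ Ω and b₂ ∩ Ωᶜ ≠ ∅, there exists a function f, holomorphic on Ω and bounded on V, such that f|_{b₁} has no bounded holomorphic extension to b₂. -/
/-
Near a boundary point ζ ∈ b₂ of Ω the star condition gives w ∈ b₂ and a complex hyperplane
{ℓ = ℓ w} through w missing closure Ω, so f = 1 / (ℓ - ℓ w) is holomorphic on a neighbourhood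
of closure Ω and hence bounded on the relatively compact set V. A holomorphic extension F of
f|b₁ to the convex ball b₂ would make (ℓ - ℓ w) F - 1 vanish near the centre of b₁, hence on all
of b₂ by the identity principle along complex lines, which fails at w.
-/

open Set Metric

/-- The star condition for an open connected subset of ℂ^d. -/
def StarCondition {d : ℕ} (Ω : Set (EuclideanSpace ℂ (Fin d))) : Prop :=
  ∀ ζ ∈ frontier Ω, ∀ ε > (0:ℝ), ∃ w : EuclideanSpace ℂ (Fin d),
    w ∉ closure Ω ∧ ‖w - ζ‖ < ε ∧ ∃ v : EuclideanSpace ℂ (Fin d), v ≠ 0 ∧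
      ∀ z : EuclideanSpace ℂ (Fin d), (inner ℂ z v : ℂ) = (inner ℂ w v : ℂ) → z ∉ closure Ω

open Filter Topology

theorem IsPreconnected.exists_mem_frontier_of_not_subset {X : Type*} [TopologicalSpace X]
    {s U : Set X} (hs : IsPreconnected s) (hU : IsOpen U) (hsU : (s ∩ U).Nonempty)
    (hsU' : (s \ U).Nonempty) : ∃ x ∈ s, x ∈ frontier U := by
  by_contra! h
  obtain ⟨y, hys, hyU⟩ := hsU'
  refine hyU (hs.subset_of_closure_inter_subset hU hsU (fun x ⟨hxU, hxs⟩ => ?_) hys)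
  by_contra hx
  exact h x hxs ⟨hxU, by rwa [hU.interior_eq]⟩

section IdentityPrinciple

variable {E F : Type*} [NormedAddCommGroup E] [NormedSpace ℂ E]
  [NormedAddCommGroup F] [NormedSpace ℂ F] [CompleteSpace F]

theorem DifferentiableOn.eqOn_zero_of_convex_of_eventuallyEq_zero {U : Set E} {f : E → F}
    (hf : DifferentiableOn ℂ f U) (hU : IsOpen U) (hUc : Convex ℝ U) {a : E} (ha : a ∈ U)
    (hfa : f =ᶠ[𝓝 a] 0) : EqOn f 0 U := by
  intro b hb
  -- Mathlib's identity principle is one-variable: restrict to the complex line through `a`, `b`.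
  set ψ : ℂ → E := fun t => a + t • (b - a) with hψ
  have hψc : Continuous ψ := by fun_prop
  have hψd : Differentiable ℂ ψ := by fun_prop
  have hsc : Convex ℝ (ψ ⁻¹' U) :=
    (hUc.translate_preimage_right a).linear_preimage
      ((LinearMap.toSpanSingleton ℂ E (b - a)).restrictScalars ℝ)
  have hslice : AnalyticOnNhd ℂ (f ∘ ψ) (ψ ⁻¹' U) :=
    (hf.comp hψd.differentiableOn (mapsTo_preimage ψ U)).analyticOnNhd (hU.preimage hψc)
  have h0 : ψ 0 = a := by simp [hψ]
  have h1 : ψ 1 = b := by simp [hψ]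
  have hzero : f ∘ ψ =ᶠ[𝓝 0] 0 := (hψc.tendsto' 0 a h0).eventually hfa
  simpa [h1] using hslice.eqOn_zero_of_preconnected_of_eventuallyEq_zero hsc.isPreconnected
    (by simpa [h0] using ha) hzero (show (1 : ℂ) ∈ ψ ⁻¹' U by simpa [h1] using hb)

theorem not_differentiableOn_of_mul_eventuallyEq_one {U : Set E} {g F : E → ℂ}
    (hU : IsOpen U) (hUc : Convex ℝ U) (hg : DifferentiableOn ℂ g U) {a w : E} (ha : a ∈ U)
    (hw : w ∈ U) (hgw : g w = 0) (hgF : (fun z => g z * F z) =ᶠ[𝓝 a] 1) :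
    ¬ DifferentiableOn ℂ F U := by
  intro hF
  have h := ((hg.mul hF).sub_const 1).eqOn_zero_of_convex_of_eventuallyEq_zero hU hUc ha
    (hgF.mono fun z hz => sub_eq_zero.mpr hz) hw
  simp [hgw] at h

end IdentityPrinciple

theorem StarCondition.exists_hyperplane_near {d : ℕ} {Ω : Set (EuclideanSpace ℂ (Fin d))}
    (hΩ : StarCondition Ω) {ζ : EuclideanSpace ℂ (Fin d)} (hζ : ζ ∈ frontier Ω) {ε : ℝ}
    (hε : 0 < ε) : ∃ w, dist w ζ < ε ∧ ∃ ℓ : EuclideanSpace ℂ (Fin d) →L[ℂ] ℂ,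
      ∀ z ∈ closure Ω, ℓ z ≠ ℓ w := by
  obtain ⟨w, -, hwζ, v, -, hH⟩ := hΩ ζ hζ ε hε
  refine ⟨w, by rwa [dist_eq_norm], innerSL ℂ v, fun z hz hzw => hH z ?_ hz⟩
  simpa [inner_conj_symm] using congrArg (starRingEnd ℂ) hzw

theorem stmt_9_general {d : ℕ} (Ω V : Set (EuclideanSpace ℂ (Fin d)))
    (hΩopen : IsOpen Ω) (hstar : StarCondition Ω)
    (hVsub : V ⊆ Ω) (hVbdd : Bornology.IsBounded V)
    (c₁ c₂ : EuclideanSpace ℂ (Fin d)) (r₁ r₂ : ℝ) (hr₁ : 0 < r₁)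
    (hb₁ : closure (ball c₁ r₁) ⊆ ball c₂ r₂ ∩ Ω)
    (hb₂ : (ball c₂ r₂ ∩ Ωᶜ).Nonempty) :
    ∃ f : EuclideanSpace ℂ (Fin d) → ℂ, DifferentiableOn ℂ f Ω ∧
      (∃ M : ℝ, ∀ z ∈ V, ‖f z‖ ≤ M) ∧
      ¬ ∃ F : EuclideanSpace ℂ (Fin d) → ℂ, DifferentiableOn ℂ F (ball c₂ r₂) ∧
          (∃ M : ℝ, ∀ z ∈ ball c₂ r₂, ‖F z‖ ≤ M) ∧
          EqOn F f (ball c₁ r₁) := by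
  have hc₁ : c₁ ∈ ball c₂ r₂ ∩ Ω := hb₁ (subset_closure (mem_ball_self hr₁))
  obtain ⟨ζ, hζb₂, hζ⟩ := (convex_ball c₂ r₂).isPreconnected.exists_mem_frontier_of_not_subset
    hΩopen ⟨c₁, hc₁⟩ hb₂
  obtain ⟨ε, hε, hεb₂⟩ := isOpen_iff.mp isOpen_ball ζ hζb₂
  obtain ⟨w, hwζ, ℓ, hℓ⟩ := hstar.exists_hyperplane_near hζ hε
  have hg : ∀ z ∈ closure Ω, ℓ z - ℓ w ≠ 0 := fun z hz => sub_ne_zero.mpr (hℓ z hz)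
  refine ⟨fun z => (ℓ z - ℓ w)⁻¹, ?_, ?_, ?_⟩
  · exact ((ℓ.differentiable.sub_const _).differentiableOn).inv
      fun z hz => hg z (subset_closure hz)
  · obtain ⟨M, hM⟩ := hVbdd.isCompact_closure.exists_bound_of_continuousOn
      ((ℓ.continuous.sub continuous_const).continuousOn.inv₀
        fun z hz => hg z (closure_mono hVsub hz))
    exact ⟨M, fun z hz => hM z (subset_closure hz)⟩
  · rintro ⟨F, hF, -, hFf⟩
    refine not_differentiableOn_of_mul_eventuallyEq_one isOpen_ball (convex_ball c₂ r₂)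
      (ℓ.differentiable.sub_const _).differentiableOn hc₁.1 (hεb₂ hwζ) (sub_self _) ?_ hF
    filter_upwards [isOpen_ball.mem_nhds (mem_ball_self hr₁)] with z hz
    rw [hFf hz]
    exact mul_inv_cancel₀ (hg z (subset_closure (hb₁ (subset_closure hz)).2))

theorem stmt_9 {d : ℕ} (Ω V : Set (EuclideanSpace ℂ (Fin d)))
    (hΩopen : IsOpen Ω) (hΩconn : IsConnected Ω) (hstar : StarCondition Ω)
    (hVopen : IsOpen V) (hVsub : V ⊆ Ω) (hVbdd : Bornology.IsBounded V)
    (c₁ c₂ : EuclideanSpace ℂ (Fin d)) (r₁ r₂ : ℝ) (hr₁ : 0 < r₁) (hr₂ : 0 < r₂)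
    (hb₁ : closure (ball c₁ r₁) ⊆ ball c₂ r₂ ∩ Ω)
    (hb₂ : (ball c₂ r₂ ∩ Ωᶜ).Nonempty) :
    ∃ f : EuclideanSpace ℂ (Fin d) → ℂ, DifferentiableOn ℂ f Ω ∧
      (∃ M : ℝ, ∀ z ∈ V, ‖f z‖ ≤ M) ∧
      ¬ ∃ F : EuclideanSpace ℂ (Fin d) → ℂ, DifferentiableOn ℂ F (ball c₂ r₂) ∧
          (∃ M : ℝ, ∀ z ∈ ball c₂ r₂, ‖F z‖ ≤ M) ∧
          EqOn F f (ball c₁ r₁) :=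
  stmt_9_general Ω V hΩopen hstar hVsub hVbdd c₁ c₂ r₁ r₂ hr₁ hb₁ hb₂
end

section
/- If an open connected set Ω ⊂ ℂ^d satisfies the star condition, then Ω is a Carathéodory domain, i.e., Ω equals the interior of its closure. -/
open Set Metric

theorem IsOpen.eq_interior_closure_of_frontier_subset {X : Type*} [TopologicalSpace X]
    {U : Set X} (hU : IsOpen U) (h : frontier U ⊆ closure (closure U)ᶜ) :
    U = interior (closure U) := by
  refine hU.subset_interior_closure.antisymm fun x hx => ?_
  by_contra hxU
  have hx_frontier : x ∈ frontier U := ⟨interior_subset hx, by rwa [hU.interior_eq]⟩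
  exact (closure_compl (s := closure U) ▸ h hx_frontier) hx

theorem StarCondition.frontier_subset_closure_compl_closure {d : ℕ}
    {Ω : Set (EuclideanSpace ℂ (Fin d))} (h : StarCondition Ω) :
    frontier Ω ⊆ closure (closure Ω)ᶜ := fun ζ hζ =>
  Metric.mem_closure_iff.mpr fun ε hε =>
    let ⟨w, hw, hwζ, _⟩ := h ζ hζ ε hε
    ⟨w, hw, by rwa [dist_comm, dist_eq_norm]⟩

theorem stmt_11_general {d : ℕ} (Ω : Set (EuclideanSpace ℂ (Fin d)))
    (hΩopen : IsOpen Ω) (hstar : StarCondition Ω) :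
    Ω = interior (closure Ω) :=
  hΩopen.eq_interior_closure_of_frontier_subset hstar.frontier_subset_closure_compl_closure

theorem stmt_11 {d : ℕ} (Ω : Set (EuclideanSpace ℂ (Fin d)))
    (hΩopen : IsOpen Ω) (hΩconn : IsConnected Ω) (hstar : StarCondition Ω) :
    Ω = interior (closure Ω) :=
  stmt_11_general Ω hΩopen hstar
end

section
/- Let Ω ⊂ ℂ^d be an open pseudoconvex set with Ω equal to the interior of its closure, and suppose closure(Ω) has a neighborhood basis of pseudoconvex open sets. Let V ⊂ Ω be a bounded open set. Then for every pair of open Euclidean balls b₁, b₂ with closure(b₁) ⊂ b₂ ∩ Ω and b₂ ∩ Ωᶜ ≠ ∅, there exists f holomorphic on Ω and bounded on V such that f|_{b₁} has no bounded holomorphic extension to b₂. -/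
open Set Metric Filter

/-- An open set `G ⊆ ℂ^d` is pseudoconvex: we use the (Cartan–Thullen equivalent)
characterization that for every sequence in `G` converging to a boundary point of `G`
there is a holomorphic function on `G` unbounded on the sequence. -/
def IsPseudoconvex {d : ℕ} (G : Set (EuclideanSpace ℂ (Fin d))) : Prop :=
  IsOpen G ∧
    ∀ (z : ℕ → EuclideanSpace ℂ (Fin d)) (ζ : EuclideanSpace ℂ (Fin d)),
      (∀ n, z n ∈ G) → ζ ∈ frontier G → Tendsto z atTop (nhds ζ) →
      ∃ f : EuclideanSpace ℂ (Fin d) → ℂ, DifferentiableOn ℂ f G ∧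
        ¬ ∃ M : ℝ, ∀ n, ‖f (z n)‖ ≤ M

theorem stmt_13 {d : ℕ} (Ω V : Set (EuclideanSpace ℂ (Fin d)))
    (hΩpc : IsPseudoconvex Ω) (hΩcara : Ω = interior (closure Ω))
    (hbasis : ∀ U : Set (EuclideanSpace ℂ (Fin d)), IsOpen U → closure Ω ⊆ U →
      ∃ G : Set (EuclideanSpace ℂ (Fin d)), IsPseudoconvex G ∧ closure Ω ⊆ G ∧ G ⊆ U)
    (hVopen : IsOpen V) (hVsub : V ⊆ Ω) (hVbdd : Bornology.IsBounded V)
    (c₁ c₂ : EuclideanSpace ℂ (Fin d)) (r₁ r₂ : ℝ) (hr₁ : 0 < r₁) (hr₂ : 0 < r₂)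
    (hb₁ : closure (ball c₁ r₁) ⊆ ball c₂ r₂ ∩ Ω)
    (hb₂ : (ball c₂ r₂ ∩ Ωᶜ).Nonempty) :
    ∃ f : EuclideanSpace ℂ (Fin d) → ℂ, DifferentiableOn ℂ f Ω ∧
      (∃ M : ℝ, ∀ z ∈ V, ‖f z‖ ≤ M) ∧
      ¬ ∃ F : EuclideanSpace ℂ (Fin d) → ℂ, DifferentiableOn ℂ F (ball c₂ r₂) ∧
          (∃ M : ℝ, ∀ z ∈ ball c₂ r₂, ‖F z‖ ≤ M) ∧
          EqOn F f (ball c₁ r₁) := by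
  have hc₁ : c₁ ∈ ball c₂ r₂ ∩ Ω := hb₁ (subset_closure (mem_ball_self hr₁))
  -- find a point of `b₂` outside `closure Ω`
  obtain ⟨x, hxb₂, hxΩ⟩ := hb₂
  have hw : ∃ w ∈ ball c₂ r₂, w ∉ closure Ω := by
    by_contra h
    push_neg at h
    have hsub : ball c₂ r₂ ⊆ Ω := by
      rw [hΩcara]
      exact interior_maximal h isOpen_ball
    exact hxΩ (hsub hxb₂)
  obtain ⟨w, hwb₂, hwΩ⟩ := hw
  -- a pseudoconvex neighborhood of `closure Ω` avoiding `w`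
  obtain ⟨G, ⟨hGopen, hGpc⟩, hΩG, hGU⟩ := hbasis {w}ᶜ isOpen_compl_singleton
    (fun y hy (h : y = w) => hwΩ (h ▸ hy))
  have hwG : w ∉ G := fun h => hGU h rfl
  have hΩsubG : Ω ⊆ G := subset_closure.trans hΩG
  -- the real segment from `c₁` to `w`
  set γ : ℝ → EuclideanSpace ℂ (Fin d) := fun t => c₁ + t • (w - c₁) with hγdef
  have hγcont : Continuous γ := by fun_prop
  have hγ0 : γ 0 = c₁ := by simp [hγdef]
  have hγ1 : γ 1 = w := by simp [hγdef]
  have hγb₂ : ∀ t ∈ Icc (0:ℝ) 1, γ t ∈ ball c₂ r₂ := fun t ht =>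
    (convex_ball c₂ r₂).add_smul_sub_mem hc₁.1 hwb₂ ht
  -- first exit time
  set T : Set ℝ := Icc (0:ℝ) 1 ∩ γ ⁻¹' Gᶜ with hTdef
  have hTclosed : IsClosed T := isClosed_Icc.inter (hGopen.isClosed_compl.preimage hγcont)
  have hT1 : (1:ℝ) ∈ T := ⟨⟨zero_le_one, le_rfl⟩, by simpa [hγ1] using hwG⟩
  have hTbdd : BddBelow T := ⟨0, fun t ht => ht.1.1⟩
  set t₀ : ℝ := sInf T with ht₀def
  have ht₀T : t₀ ∈ T := hTclosed.csInf_mem ⟨1, hT1⟩ hTbdd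
  have ht₀le1 : t₀ ≤ 1 := ht₀T.1.2
  have ht₀pos : 0 < t₀ := by
    rcases lt_or_eq_of_le ht₀T.1.1 with h | h
    · exact h
    · exfalso
      apply ht₀T.2
      rw [← h, hγ0]
      exact hΩsubG hc₁.2
  have hlt : ∀ t : ℝ, 0 ≤ t → t < t₀ → γ t ∈ G := by
    intro t ht htlt
    by_contra h
    exact absurd (csInf_le hTbdd ⟨⟨ht, htlt.le.trans ht₀le1⟩, h⟩) (not_le.mpr htlt)
  -- sequence approaching the exit point
  set u : ℕ → ℝ := fun n => t₀ - t₀ / (n + 2) with hudef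
  have hu0 : ∀ n, 0 ≤ u n := by
    intro n
    have : t₀ / ((n:ℝ) + 2) ≤ t₀ := div_le_self ht₀pos.le (by have : (0:ℝ) ≤ (n:ℝ) := n.cast_nonneg; linarith)
    simpa [hudef] using sub_nonneg.mpr this
  have hult : ∀ n, u n < t₀ := by
    intro n
    have : 0 < t₀ / ((n:ℝ) + 2) := by positivity
    simpa [hudef] using sub_lt_self t₀ this
  have hutend : Tendsto u atTop (nhds t₀) := by
    have h2 : Tendsto (fun n : ℕ => ((n:ℝ) + 2)) atTop atTop :=
      tendsto_atTop_add_const_right atTop 2 tendsto_natCast_atTop_atTop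
    have h1 : Tendsto (fun n : ℕ => t₀ / ((n:ℝ) + 2)) atTop (nhds 0) :=
      Tendsto.div_atTop tendsto_const_nhds h2
    have h3 := h1.const_sub t₀
    simpa using h3
  set z : ℕ → EuclideanSpace ℂ (Fin d) := fun n => γ (u n) with hzdef
  have hzG : ∀ n, z n ∈ G := fun n => hlt _ (hu0 n) (hult n)
  set ζ : EuclideanSpace ℂ (Fin d) := γ t₀ with hζdef
  have hztend : Tendsto z atTop (nhds ζ) := (hγcont.tendsto t₀).comp hutend
  have hζfront : ζ ∈ frontier G := by
    rw [hGopen.frontier_eq]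
    exact ⟨mem_closure_of_tendsto hztend (Eventually.of_forall hzG), ht₀T.2⟩
  -- the unbounded holomorphic function
  obtain ⟨f, hfG, hfunb⟩ := hGpc z ζ hzG hζfront hztend
  refine ⟨f, hfG.mono hΩsubG, ?_, ?_⟩
  · -- f is bounded on V
    have hK : IsCompact (closure V) := hVbdd.isCompact_closure
    have hsub : closure V ⊆ G := (closure_mono hVsub).trans hΩG
    obtain ⟨M, hM⟩ := hK.exists_bound_of_continuousOn (hfG.continuousOn.mono hsub)
    exact ⟨M, fun v hv => hM v (subset_closure hv)⟩
  · -- no bounded extension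
    rintro ⟨F, hF, ⟨M, hM⟩, hEq⟩
    apply hfunb
    -- complexified line
    set Γ : ℂ → EuclideanSpace ℂ (Fin d) := fun τ => c₁ + τ • (w - c₁) with hΓdef
    have hΓdiff : Differentiable ℂ Γ := (differentiable_id.smul_const _).const_add c₁
    have hΓcont : Continuous Γ := hΓdiff.continuous
    have hΓreal : ∀ t : ℝ, Γ (t : ℂ) = γ t := by
      intro t
      simp only [hΓdef, hγdef, Complex.coe_smul]
    have hΓ0 : Γ 0 = c₁ := by simp [hΓdef]
    set D : Set ℂ := Γ ⁻¹' (ball c₂ r₂ ∩ G) with hDdef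
    have hDopen : IsOpen D := (isOpen_ball.inter hGopen).preimage hΓcont
    have h0D : (0:ℂ) ∈ D := by
      show Γ 0 ∈ ball c₂ r₂ ∩ G
      rw [hΓ0]
      exact ⟨hc₁.1, hΩsubG hc₁.2⟩
    set C : Set ℂ := connectedComponentIn D 0 with hCdef
    have hCopen : IsOpen C := hDopen.connectedComponentIn
    have hCsub : C ⊆ D := connectedComponentIn_subset D 0
    have hFC : DifferentiableOn ℂ (F ∘ Γ) C :=
      hF.comp hΓdiff.differentiableOn (fun τ hτ => (hCsub hτ).1)
    have hfC : DifferentiableOn ℂ (f ∘ Γ) C :=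
      hfG.comp hΓdiff.differentiableOn (fun τ hτ => (hCsub hτ).2)
    have hev : (F ∘ Γ) =ᶠ[nhds (0:ℂ)] (f ∘ Γ) := by
      have hmem : Γ ⁻¹' (ball c₁ r₁) ∈ nhds (0:ℂ) := by
        refine (isOpen_ball.preimage hΓcont).mem_nhds ?_
        show Γ 0 ∈ ball c₁ r₁
        rw [hΓ0]
        exact mem_ball_self hr₁
      exact Filter.eventually_of_mem hmem (fun τ hτ => hEq hτ)
    have heqOn : EqOn (F ∘ Γ) (f ∘ Γ) C :=
      (hFC.analyticOnNhd hCopen).eqOn_of_preconnected_of_eventuallyEq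
        (hfC.analyticOnNhd hCopen) isPreconnected_connectedComponentIn
        (mem_connectedComponentIn h0D) hev
    refine ⟨M, fun n => ?_⟩
    have hun : ((u n : ℝ) : ℂ) ∈ C := by
      have hsub' : (fun t : ℝ => (t : ℂ)) '' Icc 0 (u n) ⊆ D := by
        rintro τ ⟨t, ht, rfl⟩
        show Γ (t : ℂ) ∈ ball c₂ r₂ ∩ G
        rw [hΓreal]
        exact ⟨hγb₂ t ⟨ht.1, ht.2.trans ((hult n).le.trans ht₀le1)⟩,
          hlt t ht.1 (lt_of_le_of_lt ht.2 (hult n))⟩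
      have hconn : IsPreconnected ((fun t : ℝ => (t : ℂ)) '' Icc 0 (u n)) :=
        isPreconnected_Icc.image _ Complex.continuous_ofReal.continuousOn
      have h0mem : (0:ℂ) ∈ (fun t : ℝ => (t : ℂ)) '' Icc 0 (u n) :=
        ⟨0, ⟨le_rfl, hu0 n⟩, by simp⟩
      exact (hconn.subset_connectedComponentIn h0mem hsub') ⟨u n, ⟨hu0 n, le_rfl⟩, rfl⟩
    have hFz : F (z n) = f (z n) := by
      have := heqOn hun
      simpa [Function.comp, hΓreal] using this
    have hzb₂ : z n ∈ ball c₂ r₂ := hγb₂ (u n) ⟨hu0 n, (hult n).le.trans ht₀le1⟩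
    calc ‖f (z n)‖ = ‖F (z n)‖ := by rw [hFz]
      _ ≤ M := hM _ hzb₂
end

section
/- Let D be the open unit disc, J a relatively open proper subset of the unit circle, and J_m = J ∩ Δ_m where Δ_m = {z ∈ D ∪ J : dist(z, ∂D ∖ J) ≥ 1/m}. For n, m ∈ ℕ define E_{n,m} as the set of continuous functions f on D ∪ J, holomorphic on D, such that for every θ with e^{iθ} ∈ J_m there exists y with e^{iy} ∈ J_m, 0 < |y − θ| < 1/n, and |Re f(e^{iy}) − Re f(e^{iθ})| > n|y − θ|. Then E_{n,m} is open in A(D,J) with the topology of uniform convergence on the compact sets Δ_m. -/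
open Set Metric Complex Filter Topology

theorem stmt_14 (J : Set ℂ) (hJsub : J ⊆ sphere (0:ℂ) 1)
    (hJrelopen : ∃ U : Set ℂ, IsOpen U ∧ J = sphere (0:ℂ) 1 ∩ U)
    (hJproper : J ≠ sphere (0:ℂ) 1)
    (Δ : ℕ → Set ℂ)
    (hΔ : ∀ m : ℕ, Δ m = {z ∈ ball (0:ℂ) 1 ∪ J |
        Metric.infDist z (sphere (0:ℂ) 1 \ J) ≥ 1 / (m : ℝ)})
    (Jm : ℕ → Set ℂ) (hJm : ∀ m : ℕ, Jm m = J ∩ Δ m)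
    -- the E_{n,m} membership condition for a function f
    (Econd : (ℂ → ℂ) → ℕ → ℕ → Prop)
    (hEcond : ∀ f n m, Econd f n m ↔
      ∀ θ : ℝ, Complex.exp (θ * Complex.I) ∈ Jm m →
        ∃ y : ℝ, Complex.exp (y * Complex.I) ∈ Jm m ∧ 0 < |y - θ| ∧ |y - θ| < 1 / (n : ℝ) ∧
          |(f (Complex.exp (y * Complex.I))).re - (f (Complex.exp (θ * Complex.I))).re| >
            (n : ℝ) * |y - θ|)
    (n m : ℕ) (hn : 1 ≤ n) (hm : 1 ≤ m)
    (f : ℂ → ℂ) (hf : ContinuousOn f (ball (0:ℂ) 1 ∪ J) ∧ DifferentiableOn ℂ f (ball (0:ℂ) 1))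
    (hfE : Econd f n m) :
    ∃ k : ℕ, 1 ≤ k ∧ ∃ ε > (0:ℝ), ∀ g : ℂ → ℂ,
      ContinuousOn g (ball (0:ℂ) 1 ∪ J) → DifferentiableOn ℂ g (ball (0:ℂ) 1) →
      (∀ z ∈ Δ k, ‖g z - f z‖ < ε) → Econd g n m := by
  classical
  have hm0 : (0:ℝ) < 1/(m:ℝ) := by
    have : (0:ℝ) < (m:ℝ) := by exact_mod_cast hm
    positivity
  have hJmJ : Jm m ⊆ J := by rw [hJm m]; exact inter_subset_left
  have hJmΔ : Jm m ⊆ Δ m := by rw [hJm m]; exact inter_subset_right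
  have hJmeq : Jm m = sphere (0:ℂ) 1 ∩ {z | 1/(m:ℝ) ≤ infDist z (sphere (0:ℂ) 1 \ J)} := by
    rw [hJm m, hΔ m]
    ext z
    simp only [mem_inter_iff, mem_setOf_eq, mem_union, ge_iff_le]
    constructor
    · rintro ⟨hzJ, _, hd⟩
      exact ⟨hJsub hzJ, hd⟩
    · rintro ⟨hzs, hd⟩
      have hzJ : z ∈ J := by
        by_contra hzn
        have h0 : infDist z (sphere (0:ℂ) 1 \ J) = 0 := infDist_zero_of_mem ⟨hzs, hzn⟩
        rw [h0] at hd; linarith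
      exact ⟨hzJ, Or.inr hzJ, hd⟩
  have hJmclosed : IsClosed (Jm m) := by
    rw [hJmeq]
    exact (isClosed_sphere).inter (isClosed_le continuous_const (continuous_infDist_pt _))
  set p : ℝ := 2*Real.pi with hpdef
  have hp : 0 < p := by have := Real.pi_pos; simp [hpdef]; linarith
  have hexp : ∀ (v : ℝ) (d : ℤ), Complex.exp ((↑(v + (d:ℝ)*p) : ℂ) * Complex.I)
      = Complex.exp ((v:ℂ) * Complex.I) := by
    intro v d
    have h1 : ((↑(v + (d:ℝ)*p) : ℂ)) * Complex.I
        = (v:ℂ) * Complex.I + (d:ℂ) * (2*(Real.pi:ℂ) * Complex.I) := by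
      push_cast [hpdef]; ring
    rw [h1, Complex.exp_add, Complex.exp_int_mul_two_pi_mul_I, mul_one]
  have key : ∃ ε > (0:ℝ), ∀ θ : ℝ, Complex.exp (θ * Complex.I) ∈ Jm m →
      ∃ y : ℝ, Complex.exp (y * Complex.I) ∈ Jm m ∧ 0 < |y - θ| ∧ |y - θ| < 1/(n:ℝ) ∧
        |(f (Complex.exp (y * Complex.I))).re - (f (Complex.exp (θ * Complex.I))).re|
          > (n:ℝ)*|y - θ| + 2*ε := by
    by_contra hcon
    push_neg at hcon
    have hsel : ∀ k : ℕ, ∃ u : ℝ, u ∈ Icc 0 p ∧ Complex.exp ((u:ℂ) * Complex.I) ∈ Jm m ∧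
        ∀ y : ℝ, Complex.exp ((y:ℂ) * Complex.I) ∈ Jm m → 0 < |y - u| → |y - u| < 1/(n:ℝ) →
          |(f (Complex.exp ((y:ℂ) * Complex.I))).re - (f (Complex.exp ((u:ℂ) * Complex.I))).re|
            ≤ (n:ℝ)*|y - u| + 2*(1/((k:ℝ)+1)) := by
      intro k
      obtain ⟨θ, hθmem, hθ⟩ := hcon (1/((k:ℝ)+1)) (by positivity)
      set d : ℤ := toIcoDiv hp 0 θ with hd
      set u : ℝ := toIcoMod hp 0 θ with hu
      have hud : θ = u + (d:ℝ) * p := by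
        have h2 : θ - u = d • p := self_sub_toIcoMod hp 0 θ
        rw [zsmul_eq_mul] at h2; linarith
      have hmemIco : u ∈ Ico 0 p := toIcoMod_mem_Ico' hp θ
      have hexpu : Complex.exp ((u:ℂ) * Complex.I) = Complex.exp ((θ:ℂ) * Complex.I) := by
        conv_rhs => rw [hud]
        exact (hexp u d).symm
      refine ⟨u, ⟨hmemIco.1, hmemIco.2.le⟩, by rw [hexpu]; exact hθmem, ?_⟩
      intro y hy h1 h2
      have habs : |y + (d:ℝ)*p - θ| = |y - u| := by
        rw [hud]; congr 1; ring
      have hy' := hθ (y + (d:ℝ)*p) (by rw [hexp]; exact hy)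
        (by rw [habs]; exact h1) (by rw [habs]; exact h2)
      rw [hexp, habs, ← hexpu] at hy'
      exact hy'
    choose u hu1 hu2 hu3 using hsel
    obtain ⟨x, hxI, φ, hφ, hconv⟩ := (isCompact_Icc (a := (0:ℝ)) (b := p)).tendsto_subseq hu1
    have hcont : Continuous fun t : ℝ => Complex.exp ((t:ℂ) * Complex.I) := by
      exact Complex.continuous_exp.comp (Complex.continuous_ofReal.mul continuous_const)
    have hexptend : Tendsto (fun k => Complex.exp ((u (φ k) : ℂ) * Complex.I)) atTop
        (𝓝 (Complex.exp ((x:ℂ) * Complex.I))) := (hcont.tendsto x).comp hconv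
    have hxmem : Complex.exp ((x:ℂ) * Complex.I) ∈ Jm m :=
      hJmclosed.mem_of_tendsto hexptend (Filter.Eventually.of_forall fun k => hu2 (φ k))
    rw [hEcond] at hfE
    obtain ⟨y, hy, hy1, hy2, hy3⟩ := hfE x hxmem
    have hfc : ContinuousWithinAt f (ball (0:ℂ) 1 ∪ J) (Complex.exp ((x:ℂ) * Complex.I)) :=
      hf.1 _ (Or.inr (hJmJ hxmem))
    have hftend : Tendsto (fun k => (f (Complex.exp ((u (φ k) : ℂ) * Complex.I))).re) atTop
        (𝓝 ((f (Complex.exp ((x:ℂ) * Complex.I))).re)) := by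
      have h1 : Tendsto (fun k => Complex.exp ((u (φ k) : ℂ) * Complex.I)) atTop
          (𝓝[ball (0:ℂ) 1 ∪ J] (Complex.exp ((x:ℂ) * Complex.I))) := by
        rw [tendsto_nhdsWithin_iff]
        exact ⟨hexptend, Filter.Eventually.of_forall fun k => Or.inr (hJmJ (hu2 (φ k)))⟩
      exact (Complex.continuous_re.tendsto _).comp (hfc.tendsto.comp h1)
    have habstend : Tendsto (fun k => |y - u (φ k)|) atTop (𝓝 |y - x|) :=
      (tendsto_const_nhds.sub hconv).abs
    have hDtend : Tendsto (fun k =>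
        |(f (Complex.exp ((y:ℂ) * Complex.I))).re - (f (Complex.exp ((u (φ k) : ℂ) * Complex.I))).re|)
        atTop (𝓝 |(f (Complex.exp ((y:ℂ) * Complex.I))).re - (f (Complex.exp ((x:ℂ) * Complex.I))).re|) :=
      (tendsto_const_nhds.sub hftend).abs
    have hRtend : Tendsto (fun k => (n:ℝ)*|y - u (φ k)| + 2*(1/((φ k : ℝ)+1))) atTop
        (𝓝 ((n:ℝ)*|y - x| + 2*0)) := by
      have h2 : Tendsto (fun k : ℕ => (1/((φ k : ℝ)+1))) atTop (𝓝 0) :=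
        tendsto_one_div_add_atTop_nhds_zero_nat.comp hφ.tendsto_atTop
      exact (tendsto_const_nhds.mul habstend).add (tendsto_const_nhds.mul h2)
    have hev : ∀ᶠ k in atTop,
        |(f (Complex.exp ((y:ℂ) * Complex.I))).re - (f (Complex.exp ((u (φ k) : ℂ) * Complex.I))).re|
          ≤ (n:ℝ)*|y - u (φ k)| + 2*(1/((φ k : ℝ)+1)) := by
      have e1 : ∀ᶠ k in atTop, 0 < |y - u (φ k)| := habstend.eventually (eventually_gt_nhds hy1)
      have e2 : ∀ᶠ k in atTop, |y - u (φ k)| < 1/(n:ℝ) := habstend.eventually (eventually_lt_nhds hy2)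
      filter_upwards [e1, e2] with k hk1 hk2
      exact hu3 (φ k) y hy hk1 hk2
    have hle := le_of_tendsto_of_tendsto hDtend hRtend hev
    rw [mul_zero, add_zero] at hle
    linarith
  obtain ⟨ε, hε, hkey⟩ := key
  refine ⟨m, hm, ε, hε, fun g hgc hgd hclose => ?_⟩
  rw [hEcond]
  intro θ hθ
  obtain ⟨y, hy, h1, h2, h3⟩ := hkey θ hθ
  refine ⟨y, hy, h1, h2, ?_⟩
  have e1 := hclose _ (hJmΔ hy)
  have e2 := hclose _ (hJmΔ hθ)
  set Y := Complex.exp ((y:ℂ) * Complex.I)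
  set Θ := Complex.exp ((θ:ℂ) * Complex.I)
  have d1 : |(g Y).re - (f Y).re| ≤ ‖g Y - f Y‖ := by
    rw [← Complex.sub_re]
    exact Complex.abs_re_le_norm _
  have d2 : |(g Θ).re - (f Θ).re| ≤ ‖g Θ - f Θ‖ := by
    rw [← Complex.sub_re]
    exact Complex.abs_re_le_norm _
  have t1 : |(f Y).re - (f Θ).re| ≤ |(f Y).re - (g Y).re| + |(g Y).re - (g Θ).re| + |(g Θ).re - (f Θ).re| := by
    calc |(f Y).re - (f Θ).re| ≤ |(f Y).re - (g Θ).re| + |(g Θ).re - (f Θ).re| := abs_sub_le _ _ _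
    _ ≤ (|(f Y).re - (g Y).re| + |(g Y).re - (g Θ).re|) + |(g Θ).re - (f Θ).re| := by
        gcongr; exact abs_sub_le _ _ _
  have d1' : |(f Y).re - (g Y).re| ≤ ‖g Y - f Y‖ := by rw [abs_sub_comm]; exact d1
  linarith
end

section
/- Let D be the open unit disc and J a relatively open proper subset of the unit circle such that every point of J can be approximated by points in the complement of closure(D) — which holds automatically. Then the polynomials are dense in A(D,J): for every f ∈ A(D,J) and every m ∈ ℕ there exists a polynomial p with sup_{z ∈ Δ_m} |f(z) − p(z)| < 1/m, where Δ_m = {z ∈ D ∪ J : dist(z, ∂D ∖ J) ≥ 1/m}. Consequently polynomials are dense in the Fréchet topology of A(D,J). -/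
/-!
Mergelyan's theorem is not needed: since `Δ_m` lies in the closed unit disc, the radial dilates
`z ↦ f (r z)`, `r → 1⁻`, converge to `f` uniformly on `Δ_m` (uniform continuity of `f` on the
compact set swept by the segments `[z/2, z]`, which stays in `D ∪ J`). For fixed `r < 1` the
dilate is holomorphic on the disc of radius `1/r > 1`, so its Taylor polynomials converge to it
uniformly on the closed unit disc.
-/

open Set Metric Filter Topology
open scoped NNReal

theorem FormalMultilinearSeries.partialSum_eq_eval {𝕜 : Type*} [NontriviallyNormedField 𝕜]
    (p : FormalMultilinearSeries 𝕜 𝕜 𝕜) (n : ℕ) (z : 𝕜) :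
    p.partialSum n z =
      (∑ k ∈ Finset.range n, Polynomial.C (p.coeff k) * Polynomial.X ^ k).eval z := by
  simp only [FormalMultilinearSeries.partialSum, Polynomial.eval_finsetSum, Polynomial.eval_mul,
    Polynomial.eval_C, Polynomial.eval_pow, Polynomial.eval_X, p.apply_eq_pow_smul_coeff,
    smul_eq_mul, mul_comm]

theorem exists_polynomial_approx_on_closedBall {g : ℂ → ℂ} {s R ε : ℝ} (hs : 0 ≤ s)
    (hsR : s < R) (hg : DifferentiableOn ℂ g (ball 0 R)) (hε : 0 < ε) :
    ∃ p : Polynomial ℂ, ∀ z ∈ closedBall (0 : ℂ) s, ‖g z - p.eval z‖ < ε := by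
  lift s to ℝ≥0 using hs
  obtain ⟨R', hsR', hR'R⟩ := exists_between hsR
  lift R' to ℝ≥0 using (s.2.trans hsR'.le)
  obtain ⟨r', hsr', hr'R'⟩ := exists_between hsR'
  lift r' to ℝ≥0 using (s.2.trans hsr'.le)
  have hseries := (hg.mono (closedBall_subset_ball hR'R)).hasFPowerSeriesOnBall
    (s.2.trans_lt hsR')
  have hlim := Metric.tendstoUniformlyOn_iff.mp
    (hseries.tendstoUniformlyOn (r' := r') (by exact_mod_cast hr'R')) ε hε
  obtain ⟨n, hn⟩ := hlim.exists
  refine ⟨∑ k ∈ Finset.range n,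
    Polynomial.C ((cauchyPowerSeries g 0 R').coeff k) * Polynomial.X ^ k, fun z hz => ?_⟩
  rw [← FormalMultilinearSeries.partialSum_eq_eval, ← dist_eq_norm]
  simpa using hn z (closedBall_subset_ball hsr' hz)

theorem tendstoUniformlyOn_comp_ofReal_mul_nhdsLT_one {E : Type*} [UniformSpace E] {f : ℂ → E}
    {A K : Set ℂ} (hf : ContinuousOn f A) (hK : IsCompact K)
    (hKA : ∀ t ∈ Ioc (0 : ℝ) 1, ∀ z ∈ K, (t : ℂ) * z ∈ A) :
    TendstoUniformlyOn (fun (t : ℝ) z => f (t * z)) f (𝓝[<] 1) K := by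
  have hcont : ContinuousOn (fun q : ℝ × ℂ => f (q.1 * q.2)) (Icc (1 / 2) 1 ×ˢ K) :=
    hf.comp (by fun_prop) fun q hq => hKA q.1 ⟨by linarith [hq.1.1], hq.1.2⟩ q.2 hq.2
  have hunif : TendstoUniformlyOn (fun (t : ℝ) z => f (t * z)) (fun z => f ((1 : ℝ) * z))
      (𝓝[Icc (1 / 2) 1] 1) K :=
    UniformContinuousOn.tendstoUniformlyOn (F := fun (t : ℝ) z => f (t * z))
      ((isCompact_Icc.prod hK).uniformContinuousOn_of_continuous hcont) (by norm_num)
  rw [← nhdsWithin_Ico_eq_nhdsLT (by norm_num : (1 / 2 : ℝ) < 1)]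
  simp only [Complex.ofReal_one, one_mul] at hunif
  exact fun u hu => (hunif u hu).filter_mono (nhdsWithin_mono _ Ico_subset_Icc_self)

theorem isCompact_sep_le_infDist_sphere_diff {α : Type*} [MetricSpace α] [ProperSpace α]
    {x : α} {ρ c : ℝ} {J : Set α} (hJ : J ⊆ sphere x ρ) (hc : 0 < c) :
    IsCompact {z ∈ ball x ρ ∪ J | infDist z (sphere x ρ \ J) ≥ c} := by
  have heq : {z ∈ ball x ρ ∪ J | infDist z (sphere x ρ \ J) ≥ c} =
      closedBall x ρ ∩ {z | c ≤ infDist z (sphere x ρ \ J)} := by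
    ext z
    simp only [mem_inter_iff, mem_ofPred_eq, ge_iff_le, ← ball_union_sphere]
    constructor
    · rintro ⟨hz | hz, hd⟩
      exacts [⟨.inl hz, hd⟩, ⟨.inr (hJ hz), hd⟩]
    · rintro ⟨hz | hz, hd⟩
      · exact ⟨.inl hz, hd⟩
      · refine ⟨.inr ?_, hd⟩
        by_contra hzJ
        rw [infDist_zero_of_mem (show z ∈ sphere x ρ \ J from ⟨hz, hzJ⟩)] at hd
        exact hc.not_ge hd
  rw [heq]
  exact (isCompact_closedBall x ρ).inter_right
    (isClosed_le continuous_const (continuous_infDist_pt _))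

theorem ofReal_mul_mem_of_subset_closedBall {A K : Set ℂ} (hA : ball 0 1 ⊆ A)
    (hK : K ⊆ closedBall 0 1) (hKA : K ⊆ A) :
    ∀ t ∈ Ioc (0 : ℝ) 1, ∀ z ∈ K, (t : ℂ) * z ∈ A := by
  rintro t ⟨ht0, ht1⟩ z hz
  rcases ht1.lt_or_eq with ht1 | rfl
  · refine hA (mem_ball_zero_iff.mpr ?_)
    calc ‖(t : ℂ) * z‖ = t * ‖z‖ := by simp [abs_of_pos ht0]
      _ ≤ t * 1 := by gcongr; simpa using hK hz
      _ < 1 := by linarith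
  · simpa using hKA hz

theorem stmt_15_general (J : Set ℂ) (hJsub : J ⊆ sphere (0:ℂ) 1)
    (f : ℂ → ℂ)
    (hf : ContinuousOn f (ball (0:ℂ) 1 ∪ J) ∧ DifferentiableOn ℂ f (ball (0:ℂ) 1))
    (m : ℕ) (hm : 1 ≤ m) :
    ∃ p : Polynomial ℂ,
      ∀ z ∈ {z ∈ ball (0:ℂ) 1 ∪ J | Metric.infDist z (sphere (0:ℂ) 1 \ J) ≥ 1 / (m : ℝ)},
        ‖f z - p.eval z‖ < 1 / (m : ℝ) := by
  set Δ := {z ∈ ball (0:ℂ) 1 ∪ J | Metric.infDist z (sphere (0:ℂ) 1 \ J) ≥ 1 / (m : ℝ)}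
  have hε : (0 : ℝ) < 1 / m := by positivity
  have hε2 : (0 : ℝ) < 1 / (2 * m) := by positivity
  have hΔ : Δ ⊆ closedBall 0 1 := fun z hz =>
    hz.1.elim (fun h => ball_subset_closedBall h) (fun h => sphere_subset_closedBall (hJsub h))
  have hdilate := tendstoUniformlyOn_comp_ofReal_mul_nhdsLT_one hf.1
    (isCompact_sep_le_infDist_sphere_diff hJsub hε)
    (ofReal_mul_mem_of_subset_closedBall subset_union_left hΔ fun _ hz => hz.1)
  obtain ⟨r, hclose, hr0, hr1⟩ :=
    ((Metric.tendstoUniformlyOn_iff.mp hdilate _ hε2).and (Ioo_mem_nhdsLT one_pos)).exists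
  have hdiff : DifferentiableOn ℂ (fun z => f (r * z)) (ball 0 r⁻¹) :=
    hf.2.comp (by fun_prop) fun z hz => by
      have hz' : r * ‖z‖ < r * r⁻¹ := mul_lt_mul_of_pos_left (mem_ball_zero_iff.mp hz) hr0
      simpa [abs_of_pos hr0, mul_inv_cancel₀ hr0.ne'] using hz'
  obtain ⟨p, hp⟩ := exists_polynomial_approx_on_closedBall zero_le_one
    (one_lt_inv_iff₀.mpr ⟨hr0, hr1⟩) hdiff hε2
  refine ⟨p, fun z hz => ?_⟩
  calc ‖f z - p.eval z‖ ≤ ‖f z - f (r * z)‖ + ‖f (r * z) - p.eval z‖ :=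
        norm_sub_le_norm_sub_add_norm_sub _ _ _
    _ < 1 / (2 * m) + 1 / (2 * m) :=
        add_lt_add (by simpa [dist_eq_norm] using hclose z hz) (hp z (hΔ hz))
    _ = 1 / m := by field_simp; ring

theorem stmt_15 (J : Set ℂ) (hJsub : J ⊆ sphere (0:ℂ) 1)
    (hJrelopen : ∃ U : Set ℂ, IsOpen U ∧ J = sphere (0:ℂ) 1 ∩ U)
    (hJproper : J ≠ sphere (0:ℂ) 1)
    (f : ℂ → ℂ)
    (hf : ContinuousOn f (ball (0:ℂ) 1 ∪ J) ∧ DifferentiableOn ℂ f (ball (0:ℂ) 1))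
    (m : ℕ) (hm : 1 ≤ m) :
    ∃ p : Polynomial ℂ,
      ∀ z ∈ {z ∈ ball (0:ℂ) 1 ∪ J | Metric.infDist z (sphere (0:ℂ) 1 \ J) ≥ 1 / (m : ℝ)},
        ‖f z - p.eval z‖ < 1 / (m : ℝ) :=
  stmt_15_general J hJsub f hf m hm
end

section
/- Let Ω be a Jordan domain, J ⊊ ∂Ω relatively open, and for n, m ∈ ℕ let E_{n,m} = {f ∈ A(Ω,J) : for all z₀ ∈ J_m there exists z ∈ (J_m ∖ {z₀}) ∩ D(z₀, 1/n) with |f(z) − f(z₀)|/|z − z₀| > n}, where J_m = J ∩ Δ_m and Δ_m = {z ∈ Ω ∪ J : dist(z, ∂Ω ∖ J) ≥ 1/m}. Then E_{n,m} is open in A(Ω,J). -/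
open Set Metric

/-- `Ω` is a Jordan domain: a bounded open connected set whose boundary is a
Jordan curve (a homeomorphic image of the unit circle). -/
def IsJordanDomain (Ω : Set ℂ) : Prop :=
  IsOpen Ω ∧ IsConnected Ω ∧ Bornology.IsBounded Ω ∧
    ∃ φ : (Metric.sphere (0:ℂ) 1) → ℂ, Continuous φ ∧ Function.Injective φ ∧
      frontier Ω = Set.range φ

/-!
Write `K = J_m`; it is compact, and `E_{n,m}` only sees the values of `f` on `K`. A steep chord
of `f` from `z₀` to `z` stays steep for every `g` uniformly close to `f` on `K` and every base
point `z₀'` near `z₀`, by continuity of `f` at `z₀`. Compactness of `K` makes the admissible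
distance between `g` and `f` uniform in `z₀`.
-/

open Filter Topology

section SteepChord

variable {X Y : Type*} [MetricSpace X] [PseudoMetricSpace Y]

def HasSteepChordAt (K : Set X) (r n : ℝ) (f : X → Y) (z₀ : X) : Prop :=
  ∃ z ∈ (K \ {z₀}) ∩ ball z₀ r, n < dist (f z) (f z₀) / dist z z₀

theorem HasSteepChordAt.eventually_of_dist_lt {K : Set X} {r n : ℝ} {f : X → Y} {z₀ : X}
    (h : HasSteepChordAt K r n f z₀) (hf : ContinuousWithinAt f K z₀) :
    ∀ᶠ p : ℝ × X in 𝓝[>] 0 ×ˢ 𝓝 z₀, p.2 ∈ K →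
      ∀ g : X → Y, (∀ z ∈ K, dist (g z) (f z) < p.1) → HasSteepChordAt K r n g p.2 := by
  obtain ⟨z, ⟨⟨hzK, hzz₀⟩, hzr⟩, hslope⟩ := h
  set excess : X → ℝ := fun w => dist (f z) (f w) - n * dist z w
  have hpos : 0 < excess z₀ := by
    have hd : 0 < dist z z₀ := dist_pos.2 hzz₀
    rw [lt_div_iff₀ hd] at hslope
    simp only [excess]
    linarith
  have hcont : ContinuousWithinAt excess K z₀ :=
    (continuousWithinAt_const.dist hf).sub
      (continuousWithinAt_const.mul (continuous_const.dist continuous_id).continuousWithinAt)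
  have hε : ∀ᶠ ε in 𝓝[>] (0 : ℝ), ε < excess z₀ / 4 :=
    (eventually_lt_nhds (by positivity)).filter_mono nhdsWithin_le_nhds
  have hw : ∀ᶠ w in 𝓝 z₀, (w ∈ K → excess z₀ / 2 < excess w) ∧ w ≠ z ∧ w ∈ ball z r :=
    (eventually_nhdsWithin_iff.1 (hcont.eventually_const_lt (half_lt_self hpos))).and
      ((eventually_ne_nhds (Ne.symm hzz₀)).and (isOpen_ball.mem_nhds (mem_ball_comm.1 hzr)))
  filter_upwards [hε.prod_mk hw]
  rintro ⟨ε, w⟩ ⟨hεlt, hwexcess, hwz, hwr⟩ hwK g hg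
  dsimp only at hwexcess hwz hwr hwK hg ⊢
  refine ⟨z, ⟨⟨hzK, hwz.symm⟩, mem_ball_comm.1 hwr⟩, ?_⟩
  rw [lt_div_iff₀ (dist_pos.2 hwz.symm)]
  -- `dist (g z) (g w) > dist (f z) (f w) - 2ε` and `2ε < excess z₀ / 2 < excess w`
  have htri := dist_triangle4 (f z) (g z) (g w) (f w)
  have hgz := hg z hzK
  have hgw := hg w hwK
  have hexc := hwexcess hwK
  simp only [excess] at hexc hεlt
  rw [dist_comm (f z) (g z)] at htri
  linarith

theorem IsCompact.exists_pos_forall_hasSteepChordAt {K : Set X} {r n : ℝ} {f : X → Y}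
    (hK : IsCompact K) (hf : ContinuousOn f K) (h : ∀ z₀ ∈ K, HasSteepChordAt K r n f z₀) :
    ∃ ε > 0, ∀ g : X → Y, (∀ z ∈ K, dist (g z) (f z) < ε) →
      ∀ z₀ ∈ K, HasSteepChordAt K r n g z₀ := by
  have hunif := Eventually.curry <| hK.mem_prod_nhdsSet_of_forall fun z₀ hz₀ =>
    (h z₀ hz₀).eventually_of_dist_lt (hf z₀ hz₀)
  obtain ⟨ε, hε, hεpos⟩ := (hunif.and self_mem_nhdsWithin).exists
  exact ⟨ε, hεpos, fun g hg z₀ hz₀ => hε.self_of_nhdsSet z₀ hz₀ hz₀ g hg⟩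

end SteepChord

theorem IsCompact.inter_setOf_le_infDist {X : Type*} [MetricSpace X] {F J : Set X}
    (hF : IsCompact F) (hJ : J ⊆ F) {c : ℝ} (hc : 0 < c) :
    IsCompact (J ∩ {z | c ≤ infDist z (F \ J)}) := by
  have hcut : J ∩ {z | c ≤ infDist z (F \ J)} = F ∩ {z | c ≤ infDist z (F \ J)} := by
    refine Subset.antisymm (inter_subset_inter_left _ hJ) ?_
    rintro z ⟨hzF, hzc⟩
    refine ⟨?_, hzc⟩
    by_contra hzJ
    rw [mem_ofPred_eq, infDist_zero_of_mem (mem_sdiff_of_mem hzF hzJ)] at hzc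
    exact hzc.not_gt hc
  rw [hcut]
  exact hF.inter_right (isClosed_le continuous_const (continuous_infDist_pt _))

theorem stmt_18_general (Ω J : Set ℂ) (hΩ : IsJordanDomain Ω)
    (hJsub : J ⊆ frontier Ω)
    (Δ : ℕ → Set ℂ)
    (hΔ : ∀ m : ℕ, Δ m = {z ∈ Ω ∪ J | Metric.infDist z (frontier Ω \ J) ≥ 1 / (m : ℝ)})
    (Jm : ℕ → Set ℂ) (hJm : ∀ m : ℕ, Jm m = J ∩ Δ m)
    (Econd : (ℂ → ℂ) → ℕ → ℕ → Prop)
    (hEcond : ∀ f n m, Econd f n m ↔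
      ∀ z₀ ∈ Jm m, ∃ z ∈ (Jm m \ {z₀}) ∩ ball z₀ (1 / (n : ℝ)),
        ‖f z - f z₀‖ / ‖z - z₀‖ > (n : ℝ))
    (n m : ℕ) (hm : 1 ≤ m)
    (f : ℂ → ℂ) (hf : ContinuousOn f (Ω ∪ J) ∧ DifferentiableOn ℂ f Ω)
    (hfE : Econd f n m) :
    ∃ k : ℕ, 1 ≤ k ∧ ∃ ε > (0:ℝ), ∀ g : ℂ → ℂ,
      ContinuousOn g (Ω ∪ J) → DifferentiableOn ℂ g Ω →
      (∀ z ∈ Δ k, ‖g z - f z‖ < ε) → Econd g n m := by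
  have hJm_eq : Jm m = J ∩ {z | 1 / (m : ℝ) ≤ infDist z (frontier Ω \ J)} := by
    rw [hJm, hΔ]
    ext z
    simp only [mem_inter_iff, mem_ofPred_eq, mem_union, ge_iff_le]
    tauto
  have hfrontier : IsCompact (frontier Ω) :=
    hΩ.2.2.1.isCompact_closure.of_isClosed_subset isClosed_frontier frontier_subset_closure
  have hK : IsCompact (Jm m) :=
    hJm_eq ▸ hfrontier.inter_setOf_le_infDist hJsub (one_div_pos.2 (Nat.cast_pos.2 hm))
  have hKJ : Jm m ⊆ J := hJm m ▸ inter_subset_left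
  have hKΔ : Jm m ⊆ Δ m := hJm m ▸ inter_subset_right
  have hsteep : ∀ g, Econd g n m ↔ ∀ z₀ ∈ Jm m, HasSteepChordAt (Jm m) (1 / n) n g z₀ := by
    intro g
    simp only [hEcond, HasSteepChordAt, dist_eq_norm, gt_iff_lt]
  obtain ⟨ε, hε, hstable⟩ := hK.exists_pos_forall_hasSteepChordAt
    (hf.1.mono (hKJ.trans subset_union_right)) ((hsteep f).1 hfE)
  refine ⟨m, hm, ε, hε, fun g _ _ hg => (hsteep g).2 (hstable g fun z hz => ?_)⟩
  rw [dist_eq_norm]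
  exact hg z (hKΔ hz)

theorem stmt_18 (Ω J : Set ℂ) (hΩ : IsJordanDomain Ω)
    (hJsub : J ⊆ frontier Ω)
    (hJrelopen : ∃ U : Set ℂ, IsOpen U ∧ J = frontier Ω ∩ U)
    (hJproper : J ≠ frontier Ω)
    (Δ : ℕ → Set ℂ)
    (hΔ : ∀ m : ℕ, Δ m = {z ∈ Ω ∪ J | Metric.infDist z (frontier Ω \ J) ≥ 1 / (m : ℝ)})
    (Jm : ℕ → Set ℂ) (hJm : ∀ m : ℕ, Jm m = J ∩ Δ m)
    (Econd : (ℂ → ℂ) → ℕ → ℕ → Prop)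
    (hEcond : ∀ f n m, Econd f n m ↔
      ∀ z₀ ∈ Jm m, ∃ z ∈ (Jm m \ {z₀}) ∩ ball z₀ (1 / (n : ℝ)),
        ‖f z - f z₀‖ / ‖z - z₀‖ > (n : ℝ))
    (n m : ℕ) (hn : 1 ≤ n) (hm : 1 ≤ m)
    (f : ℂ → ℂ) (hf : ContinuousOn f (Ω ∪ J) ∧ DifferentiableOn ℂ f Ω)
    (hfE : Econd f n m) :
    ∃ k : ℕ, 1 ≤ k ∧ ∃ ε > (0:ℝ), ∀ g : ℂ → ℂ,
      ContinuousOn g (Ω ∪ J) → DifferentiableOn ℂ g Ω →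
      (∀ z ∈ Δ k, ‖g z - f z‖ < ε) → Econd g n m :=
  stmt_18_general Ω J hΩ hJsub Δ hΔ Jm hJm Econd hEcond n m hm f hf hfE
end
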